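/- Let ω be a state on a polarized C*-algebra (A, P̄). Then ω is a coherent state if and only if N_ω ∩ P̄ is a maximal ideal of the commutative Banach algebra P̄ (equivalently, a codimension-one ideal with P̄ = (N_ω ∩ P̄) ⊕ ℂ1). -/

import Mathlib

set_option linter.unusedSectionVars false

open scoped ComplexOrder InnerProductSpace

variable {A : Type*} [NormedRing A] [StarRing A] [CStarRing A] [NormedAlgebra ℂ A]
  [StarModule ℂ A] [CompleteSpace A]

/-- A state on a unital C*-algebra: a positive linear functional of norm one
(equivalently, taking the value 1 at the unit). -/
def IsState (ω : A →ₗ[ℂ] ℂ) : Prop :=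
  ω 1 = 1 ∧ ∀ x : A, 0 ≤ ω (star x * x)

/-- A polarization of a unital C*-algebra `A`: a closed commutative unital Banach
subalgebra `P` generating `A` (as a C*-algebra) with `P ∩ P* = ℂ·1`. -/
def IsPolarization (P : Subalgebra ℂ A) : Prop :=
  IsClosed (P : Set A) ∧
  (∀ a ∈ P, ∀ b ∈ P, a * b = b * a) ∧
  (Algebra.adjoin ℂ ((P : Set A) ∪ star (P : Set A))).topologicalClosure = ⊤ ∧
  (∀ x ∈ P, star x ∈ P → ∃ c : ℂ, x = algebraMap ℂ A c)

/-- A coherent state on the polarized C*-algebra `(A, P)`. -/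
def IsCoherentState (P : Subalgebra ℂ A) (ω : A →ₗ[ℂ] ℂ) : Prop :=
  IsState ω ∧ ∀ x : A, ∀ a ∈ P, ω (x * a) = ω x * ω a

/-- The polarized C*-algebra `(A, P)` admits norm normal ordering: finite sums
`∑ bₖ* aₖ` with `aₖ, bₖ ∈ P` are norm-dense in `A`. -/
def AdmitsNormalOrdering (P : Subalgebra ℂ A) : Prop :=
  Dense {x : A | ∃ (n : ℕ) (a b : Fin n → A), (∀ i, a i ∈ P ∧ b i ∈ P) ∧
    x = ∑ i, star (b i) * a i}

/-- `(π, H, v)` is a GNS triple for the state `ω`. -/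
def IsGNS {H : Type*} [NormedAddCommGroup H] [InnerProductSpace ℂ H] [CompleteSpace H]
    (ω : A →ₗ[ℂ] ℂ) (π : A →⋆ₐ[ℂ] (H →L[ℂ] H)) (v : H) : Prop :=
  ‖v‖ = 1 ∧ (∀ x : A, ω x = ⟪v, π x v⟫_ℂ) ∧
    Dense (Set.range fun x : A => π x v)

/-!
If `ω` is coherent, its restriction to `P̄` is a character, and its kernel is `N_ω ∩ P̄`:
`ω (a⋆ a) = ω (a⋆) ω a` for `a ∈ P̄`, and `ω (a⋆ a) = 0` forces `ω a = 0` by Cauchy–Schwarz.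
Conversely, if `N_ω ∩ P̄` is a maximal ideal, Gelfand–Mazur writes every
`a ∈ P̄` as `c + n` with `c ∈ ℂ` and `n ∈ N_ω`, and Cauchy–Schwarz gives `ω (x n) = 0`, hence
`ω (x a) = c ω x = ω x ω a`.
-/

namespace PositiveLinearMap

variable {B : Type*} [NonUnitalCStarAlgebra B] [PartialOrder B] [StarOrderedRing B]

/-- Cauchy–Schwarz for the GNS semi-inner product `⟪x, y⟫ = f (x⋆ y)`. -/
theorem apply_mul_eq_zero_of_apply_star_mul_self_eq_zero (f : B →ₚ[ℂ] ℂ) {b : B}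
    (hb : f (star b * b) = 0) (x : B) : f (x * b) = 0 := by
  have hb' : ‖f.toPreGNS b‖ = 0 := by
    have := f.preGNS_norm_sq (f.toPreGNS b)
    rw [ofPreGNS_toPreGNS, hb] at this
    exact pow_eq_zero_iff two_ne_zero |>.mp (by exact_mod_cast this)
  have := norm_inner_le_norm (𝕜 := ℂ) (f.toPreGNS (star x)) (f.toPreGNS b)
  rw [hb', mul_zero, preGNS_inner_def] at this
  simpa using this

end PositiveLinearMap

namespace LinearMap

variable {ω : A →ₗ[ℂ] ℂ}

/-- `ω` is a positive functional for the spectral order of `A`, whose positive elements are the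
`x⋆ x`. -/
theorem apply_mul_eq_zero_of_apply_star_mul_self_eq_zero (hω : ∀ x : A, 0 ≤ ω (star x * x))
    {b : A} (hb : ω (star b * b) = 0) (x : A) : ω (x * b) = 0 := by
  let _ : CStarAlgebra A := {}
  let _ := CStarAlgebra.spectralOrder A
  have := CStarAlgebra.spectralOrderedRing A
  refine PositiveLinearMap.apply_mul_eq_zero_of_apply_star_mul_self_eq_zero
    (.mk₀ ω fun a ha => ?_) hb x
  obtain ⟨s, rfl⟩ := CStarAlgebra.nonneg_iff_eq_star_mul_self.mp ha
  exact hω s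

theorem apply_mul_eq_mul_of_apply_star_mul_self_sub_eq_zero
    (hω : ∀ x : A, 0 ≤ ω (star x * x)) {a : A} {c : ℂ}
    (h : ω (star (a - algebraMap ℂ A c) * (a - algebraMap ℂ A c)) = 0) (x : A) :
    ω (x * a) = ω x * c := by
  have := apply_mul_eq_zero_of_apply_star_mul_self_eq_zero hω h x
  rwa [mul_sub, ← Algebra.commutes, ← Algebra.smul_def, map_sub, map_smul, smul_eq_mul,
    sub_eq_zero, mul_comm c] at this

end LinearMap

theorem IsCoherentState.apply_eq_zero_iff {P : Subalgebra ℂ A} {ω : A →ₗ[ℂ] ℂ}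
    (h : IsCoherentState P ω) {a : A} (ha : a ∈ P) :
    ω a = 0 ↔ ω (star a * a) = 0 := by
  refine ⟨fun h0 => by rw [h.2 _ a ha, h0, mul_zero], fun h0 => ?_⟩
  simpa using LinearMap.apply_mul_eq_zero_of_apply_star_mul_self_eq_zero h.1.2 h0 1

/-- Gelfand–Mazur: `B ⧸ I` is a complex Banach division algebra, hence `ℂ`. -/
theorem Ideal.IsMaximal.exists_sub_algebraMap_mem {B : Type*} [NormedCommRing B]
    [NormedAlgebra ℂ B] [CompleteSpace B] {I : Ideal B} (hI : I.IsMaximal) (p : B) :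
    ∃ c : ℂ, p - algebraMap ℂ B c ∈ I := by
  let _ := Ideal.Quotient.field I
  let e := NormedRing.algEquivComplexOfComplete (isUnit_iff_ne_zero (G₀ := B ⧸ I))
  refine ⟨e.symm (Ideal.Quotient.mk I p), ?_⟩
  rw [← Ideal.Quotient.eq_zero_iff_mem, map_sub, ← Ideal.Quotient.mkₐ_eq_mk ℂ, AlgHom.commutes]
  exact sub_eq_zero.mpr (e.apply_symm_apply _).symm

theorem Subalgebra.exists_sub_algebraMap_mem_of_isMaximal {B : Type*} [NormedRing B]
    [NormedAlgebra ℂ B] [CompleteSpace B] {P : Subalgebra ℂ B} (hclosed : IsClosed (P : Set B))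
    (hcomm : ∀ a ∈ P, ∀ b ∈ P, a * b = b * a) {I : Ideal P} (hI : I.IsMaximal) (p : P) :
    ∃ c : ℂ, p - algebraMap ℂ P c ∈ I := by
  let _ : NormedCommRing P := { mul_comm := fun p q => Subtype.ext (hcomm p p.2 q q.2) }
  have : CompleteSpace P := hclosed.completeSpace_coe
  exact hI.exists_sub_algebraMap_mem p

/-- A state `ω` on a polarized C*-algebra `(A, P̄)` is coherent if and only
if `N_ω ∩ P̄` is a maximal ideal of the commutative Banach algebra `P̄`. -/
theorem stmt_8 (P : Subalgebra ℂ A) (hP : IsPolarization P)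
    (ω : A →ₗ[ℂ] ℂ) (hω : IsState ω) :
    IsCoherentState P ω ↔
      ∃ I : Ideal P, I.IsMaximal ∧ ∀ x : P, x ∈ I ↔ ω (star (x : A) * (x : A)) = 0 := by
  constructor
  · intro h
    let φ : P →ₐ[ℂ] ℂ := .ofLinearMap (ω ∘ₗ P.val.toLinearMap) hω.1 fun p q => h.2 p q q.2
    refine ⟨RingHom.ker φ, RingHom.ker_isMaximal_of_surjective φ fun c => ?_, fun x => ?_⟩
    · exact ⟨algebraMap ℂ P c, φ.commutes c⟩
    · exact RingHom.mem_ker.trans (h.apply_eq_zero_iff x.2)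
  · rintro ⟨I, hI, hIω⟩
    refine ⟨hω, fun x a ha => ?_⟩
    obtain ⟨c, hc⟩ := Subalgebra.exists_sub_algebraMap_mem_of_isMaximal hP.1 hP.2.1 hI ⟨a, ha⟩
    have hnull := LinearMap.apply_mul_eq_mul_of_apply_star_mul_self_sub_eq_zero hω.2
      ((hIω _).mp hc)
    have hωa : ω a = c := by simpa [hω.1] using hnull 1
    rw [hnull x, hωa]
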